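/- Let P and Q be d×d complex matrices that are orthogonal projections (Pᴴ = P, P² = P, Qᴴ = Q, Q² = Q), let φ ∈ ℂ^d be a unit vector, and let c be a nonzero real number such that P − Q = c·φφᴴ. Then c = 1 or c = −1, φ is an eigenvector of P (with eigenvalue 1 if c = 1 and eigenvalue 0 if c = −1), and P and Q commute: PQ = QP. -/

import Mathlib

open Matrix Kronecker ComplexOrder

noncomputable section

/-- The positive semidefinite square root (as `Matrix.PosSemidef.sqrt` was defined in Mathlib, Dec 2024). -/
noncomputable def Matrix.PosSemidef.sqrt {n : Type*} [Fintype n] [DecidableEq n] {A : Matrix n n ℂ}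
    (hA : A.PosSemidef) : Matrix n n ℂ :=
  (hA.1.eigenvectorUnitary : Matrix n n ℂ) *
    diagonal (fun i => ((Real.sqrt (hA.1.eigenvalues i) : ℝ) : ℂ)) *
    (star hA.1.eigenvectorUnitary : Matrix n n ℂ)

/-- The matrix absolute value `|A| = √(AᴴA)`. -/
noncomputable def matAbs {n : Type*} [Fintype n] [DecidableEq n] (A : Matrix n n ℂ) :
    Matrix n n ℂ :=
  (Matrix.posSemidef_conjTranspose_mul_self A).sqrt

/-- The trace norm `‖A‖₁ = Tr √(AᴴA)`. -/
noncomputable def traceNorm {n : Type*} [Fintype n] [DecidableEq n] (A : Matrix n n ℂ) : ℝ :=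
  ((matAbs A).trace).re

/-- The positive semidefinite square root of a PSD matrix (zero otherwise). -/
noncomputable def matSqrt {n : Type*} [Fintype n] [DecidableEq n] (σ : Matrix n n ℂ) :
    Matrix n n ℂ :=
  open scoped Classical in
  if h : σ.PosSemidef then h.sqrt else 0

/-- A density matrix: positive semidefinite with unit trace. -/
def IsDensity {n : Type*} [Fintype n] [DecidableEq n] (σ : Matrix n n ℂ) : Prop :=
  σ.PosSemidef ∧ σ.trace = 1

/-- The Choi operator of a linear map between matrix algebras. -/
noncomputable def choi {d m : ℕ}
    (S : Matrix (Fin d) (Fin d) ℂ →ₗ[ℂ] Matrix (Fin m) (Fin m) ℂ) :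
    Matrix (Fin m × Fin d) (Fin m × Fin d) ℂ :=
  ∑ i : Fin d, ∑ j : Fin d,
    (S (Matrix.single i j 1)) ⊗ₖ (Matrix.single i j 1)

/-- The ME-norm `‖S‖_ME = ‖J(S)‖₁ / d`. -/
noncomputable def MENorm {d m : ℕ}
    (S : Matrix (Fin d) (Fin d) ℂ →ₗ[ℂ] Matrix (Fin m) (Fin m) ℂ) : ℝ :=
  traceNorm (choi S) / d

/-- The diamond norm: supremum over density matrices σ of
`‖(1 ⊗ √σ) J(S) (1 ⊗ √σ)‖₁`. -/
noncomputable def diamondNorm {d m : ℕ}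
    (S : Matrix (Fin d) (Fin d) ℂ →ₗ[ℂ] Matrix (Fin m) (Fin m) ℂ) : ℝ :=
  ⨆ σ : {σ : Matrix (Fin d) (Fin d) ℂ // IsDensity σ},
    traceNorm (((1 : Matrix (Fin m) (Fin m) ℂ) ⊗ₖ matSqrt σ.1) * choi S *
      ((1 : Matrix (Fin m) (Fin m) ℂ) ⊗ₖ matSqrt σ.1))

/-- The M-operator `M(S) = Tr_B |J(S)|`. -/
noncomputable def Mop {d m : ℕ}
    (S : Matrix (Fin d) (Fin d) ℂ →ₗ[ℂ] Matrix (Fin m) (Fin m) ℂ) :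
    Matrix (Fin d) (Fin d) ℂ :=
  Matrix.of fun k l => ∑ b : Fin m, matAbs (choi S) (b, k) (b, l)

/-- A quantum channel: completely positive (PSD Choi operator, by Choi's theorem)
and trace preserving. -/
def IsQChannel {d m : ℕ}
    (S : Matrix (Fin d) (Fin d) ℂ →ₗ[ℂ] Matrix (Fin m) (Fin m) ℂ) : Prop :=
  (choi S).PosSemidef ∧ ∀ ρ : Matrix (Fin d) (Fin d) ℂ, (S ρ).trace = ρ.trace

/-! Write `R = φφᴴ`; it is an idempotent with `R X R ∈ ℂ R` for every `X`. Expanding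
`(P - cR)² = P - cR` gives `PR + RP = (c + 1) R`. Multiplying by `R` on either side, with
`RPR = aR` for `a = φᴴPφ`, yields `PR = RP = aR` and `c = 2a - 1`, and `P² = P` forces
`a ∈ {0, 1}`. Then `Pφ = aφ`, and `PQ = P - caR = QP`. -/

section Algebra

variable {𝕜 A : Type*} [Field 𝕜] [Ring A] [Algebra 𝕜 A] {P R : A}

theorem IsIdempotentElem.mul_add_mul_eq_smul_of_sub_smul {c : 𝕜} (hP : IsIdempotentElem P)
    (hR : IsIdempotentElem R) (hc : c ≠ 0) (hQ : IsIdempotentElem (P - c • R)) :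
    P * R + R * P = (c + 1) • R := by
  have h : c • (P * R + R * P) = c • ((c + 1) • R) := by
    have := hQ.eq
    simp only [sub_mul, mul_sub, smul_mul_assoc, mul_smul_comm, hP.eq, hR.eq] at this
    linear_combination (norm := module) -this
  exact smul_right_injective A hc h

theorem IsIdempotentElem.eq_zero_or_one_of_mul_eq_smul {μ : 𝕜} (hP : IsIdempotentElem P)
    (hR0 : R ≠ 0) (hPR : P * R = μ • R) : μ = 0 ∨ μ = 1 := by
  refine IsIdempotentElem.iff_eq_zero_or_one.mp (smul_left_injective 𝕜 hR0 ?_)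
  change (μ * μ) • R = μ • R
  rw [← smul_smul, ← hPR, ← mul_smul_comm, ← hPR, ← mul_assoc, hP.eq]

theorem IsIdempotentElem.mul_eq_smul_of_mul_add_mul_eq_smul {a s : 𝕜} (hR : IsIdempotentElem R)
    (hRPR : R * P * R = a • R) (h : P * R + R * P = s • R) :
    P * R = (s - a) • R ∧ R * P = (s - a) • R := by
  constructor
  · have := congr($h * R)
    rw [add_mul, mul_assoc, hR.eq, smul_mul_assoc, hR.eq, hRPR] at this
    rw [sub_smul, ← this, add_sub_cancel_right]
  · have := congr(R * $h)
    rw [mul_add, ← mul_assoc, hRPR, ← mul_assoc, hR.eq, mul_smul_comm, hR.eq] at this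
    rw [sub_smul, ← this, add_sub_cancel_left]

theorem IsIdempotentElem.mul_eq_smul_of_sub_smul {a c : 𝕜} (hP : IsIdempotentElem P)
    (hR : IsIdempotentElem R) (hR0 : R ≠ 0) (hRPR : R * P * R = a • R) (hc : c ≠ 0)
    (hQ : IsIdempotentElem (P - c • R)) :
    (a = 0 ∨ a = 1) ∧ P * R = a • R ∧ R * P = a • R ∧ c = 2 * a - 1 := by
  obtain ⟨hPR, hRP⟩ :=
    hR.mul_eq_smul_of_mul_add_mul_eq_smul hRPR (hP.mul_add_mul_eq_smul_of_sub_smul hR hc hQ)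
  have hca : c + 1 - a = a := by
    refine smul_left_injective 𝕜 hR0 ?_
    change (c + 1 - a) • R = a • R
    rw [← hRPR, mul_assoc, hPR, mul_smul_comm, hR.eq]
  rw [hca] at hPR hRP
  exact ⟨hP.eq_zero_or_one_of_mul_eq_smul hR0 hPR, hPR, hRP, by linear_combination hca⟩

end Algebra

namespace Matrix

variable {n α : Type*} [Fintype n] [CommSemiring α]

theorem isIdempotentElem_vecMulVec {u v : n → α} (h : v ⬝ᵥ u = 1) :
    IsIdempotentElem (vecMulVec u v) := by
  rw [IsIdempotentElem, vecMulVec_mul_vecMulVec, h, one_smul]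

theorem vecMulVec_mul_mul_vecMulVec (u v w x : n → α) (M : Matrix n n α) :
    vecMulVec u v * M * vecMulVec w x = (v ⬝ᵥ M *ᵥ w) • vecMulVec u x := by
  rw [Matrix.mul_assoc, mul_vecMulVec, vecMulVec_mul_vecMulVec, vecMulVec_smul]

end Matrix

theorem stmt14_general {d : ℕ} (P Q : Matrix (Fin d) (Fin d) ℂ)
    (hPp : P * P = P)
    (hQp : Q * Q = Q)
    (φ : Fin d → ℂ) (hφ : star φ ⬝ᵥ φ = 1)
    (c : ℝ) (hc : c ≠ 0)
    (hPQ : P - Q = (c : ℂ) • Matrix.vecMulVec φ (star φ)) :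
    (c = 1 ∨ c = -1)
    ∧ (c = 1 → P *ᵥ φ = φ)
    ∧ (c = -1 → P *ᵥ φ = 0)
    ∧ P * Q = Q * P := by
  set R := vecMulVec φ (star φ)
  have hR0 : R ≠ 0 := fun h => by
    have := congr(trace $h)
    rw [trace_vecMulVec, dotProduct_comm, hφ, trace_zero] at this
    exact one_ne_zero this
  have hQ : Q = P - (c : ℂ) • R := by rw [← hPQ, sub_sub_cancel]
  obtain ⟨ha, hPR, hRP, hca⟩ := IsIdempotentElem.mul_eq_smul_of_sub_smul hPp
    (isIdempotentElem_vecMulVec hφ) hR0 (vecMulVec_mul_mul_vecMulVec _ _ _ _ P)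
    (Complex.ofReal_ne_zero.mpr hc) (hQ ▸ hQp)
  have hPφ : P *ᵥ φ = (star φ ⬝ᵥ P *ᵥ φ) • φ := by
    have := congr($hPR *ᵥ φ)
    rwa [← mulVec_mulVec, smul_mulVec, vecMulVec_mulVec, hφ, MulOpposite.op_one, one_smul] at this
  have hac : star φ ⬝ᵥ P *ᵥ φ = ((c : ℂ) + 1) / 2 := by linear_combination -hca / 2
  refine ⟨?_, fun h => ?_, fun h => ?_, ?_⟩
  · rcases ha with ha | ha <;> rw [ha] at hca
    · exact .inr (by exact_mod_cast (by linear_combination hca : (c : ℂ) = -1))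
    · exact .inl (by exact_mod_cast (by linear_combination hca : (c : ℂ) = 1))
  · rw [hPφ, hac, h]; norm_num
  · rw [hPφ, hac, h]; norm_num
  · rw [hQ, mul_sub, sub_mul, mul_smul_comm, smul_mul_assoc, hPR, hRP]

/-- if `P`, `Q` are orthogonal projections with `P − Q = c·φφᴴ`
for a unit vector `φ` and nonzero real `c`, then `c = ±1`, `φ` is an eigenvector
of `P` (eigenvalue 1 if `c = 1`, eigenvalue 0 if `c = −1`), and `PQ = QP`. -/
theorem stmt14 {d : ℕ} (P Q : Matrix (Fin d) (Fin d) ℂ)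
    (hPh : P.IsHermitian) (hPp : P * P = P)
    (hQh : Q.IsHermitian) (hQp : Q * Q = Q)
    (φ : Fin d → ℂ) (hφ : star φ ⬝ᵥ φ = 1)
    (c : ℝ) (hc : c ≠ 0)
    (hPQ : P - Q = (c : ℂ) • Matrix.vecMulVec φ (star φ)) :
    (c = 1 ∨ c = -1)
    ∧ (c = 1 → P *ᵥ φ = φ)
    ∧ (c = -1 → P *ᵥ φ = 0)
    ∧ P * Q = Q * P :=
  stmt14_general P Q hPp hQp φ hφ c hc hPQ

end
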